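/- arXiv:2111.02693 — 2 statements merged into one kernel-verified Lean document; each statement's English description precedes it below -/
import Mathlib

section
/- Let Q₈ = ⟨a,b : a² = b², aba⁻¹ = b⁻¹⟩ act on C₈ = ⟨c : c⁸ = 1⟩ by a·c = c³, b·c = c⁵. Then the first cohomology group H¹(Q₈, Hom(C₈, ℂ*)) is isomorphic to ℤ/2. -/
/-- The action of `Q₈` on the character group `Hom(C₈, ℂ*) ≅ ℤ/8`, given by a homomorphism
`φ : Q₈ → (ℤ/8)ˣ` (with `φ(a) = 3`, `φ(b) = 5` for the action `a·c = c³`, `b·c = c⁵`),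
as a representation of `Q₈` on the `ℤ`-module `ℤ/8`. -/
def charRep (φ : QuaternionGroup 2 →* (ZMod 8)ˣ) :
    Representation ℤ (QuaternionGroup 2) (ZMod 8) where
  toFun g := LinearMap.mulLeft ℤ ((φ g : ZMod 8))
  map_one' := by ext x; simp
  map_mul' g h := by ext x; simp [mul_assoc]


private def qmap : ZMod 8 → ZMod 2 := fun y => ((y.val / 4 : ℕ) : ZMod 2)

private lemma qmap_add : ∀ y z : ZMod 8, 2*y = 0 → 2*z = 0 →
    qmap (y+z) = qmap y + qmap z := by decide

private lemma qmap_zero_iff : ∀ y : ZMod 8, 2*y = 0 → (qmap y = 0 ↔ y = 0) := by decide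

private lemma exists_half : ∀ α : ZMod 8, 4*α = 0 → ∃ x, 2*x = α := by decide

open QuaternionGroup

section phivals
variable (φ : QuaternionGroup 2 →* (ZMod 8)ˣ)
    (hφa : (φ (QuaternionGroup.a 1) : ZMod 8) = 3)
    (hφb : (φ (QuaternionGroup.xa 0) : ZMod 8) = 5)
include hφa hφb

private lemma phi_a0 : (φ (a 0) : ZMod 8) = 1 := by
  rw [show (a 0 : QuaternionGroup 2) = 1 from rfl, map_one]; rfl

private lemma phi_a2 : (φ (a 2) : ZMod 8) = 1 := by
  rw [show (a 2 : QuaternionGroup 2) = a 1 * a 1 from by decide, map_mul, Units.val_mul,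
    hφa]; decide

private lemma phi_a3 : (φ (a 3) : ZMod 8) = 3 := by
  rw [show (a 3 : QuaternionGroup 2) = a 2 * a 1 from by decide, map_mul, Units.val_mul,
    phi_a2 φ hφa hφb, hφa]; ring

private lemma phi_x1 : (φ (xa 1) : ZMod 8) = 7 := by
  rw [show (xa 1 : QuaternionGroup 2) = a 3 * xa 0 from by decide, map_mul, Units.val_mul,
    phi_a3 φ hφa hφb, hφb]; decide

private lemma phi_x2 : (φ (xa 2) : ZMod 8) = 5 := by
  rw [show (xa 2 : QuaternionGroup 2) = a 2 * xa 0 from by decide, map_mul, Units.val_mul,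
    phi_a2 φ hφa hφb, hφb]; ring

private lemma phi_x3 : (φ (xa 3) : ZMod 8) = 7 := by
  rw [show (xa 3 : QuaternionGroup 2) = a 1 * xa 0 from by decide, map_mul, Units.val_mul,
    hφa, hφb]; decide

private lemma cocycle_facts (F : QuaternionGroup 2 → ZMod 8)
    (hF : ∀ g h, F (g * h) = (φ g : ZMod 8) * F h + F g) :
    F (a 0) = 0 ∧ 2 * F (xa 0) = 0 ∧ 4 * F (a 1) = 0 ∧
      F (a 2) = 4 * F (a 1) ∧ F (a 3) = 5 * F (a 1) ∧
      F (xa 1) = 5 * F (a 1) + F (xa 0) ∧ F (xa 2) = F (xa 0) + 4 * F (a 1) ∧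
      F (xa 3) = 3 * F (xa 0) + F (a 1) := by
  have h0 : F (a 0) = 0 := by
    have := hF (a 0) (a 0)
    rw [show (a 0 * a 0 : QuaternionGroup 2) = a 0 from by decide, phi_a0 φ hφa hφb] at this
    linear_combination -this
  have h2 : F (a 2) = 4 * F (a 1) := by
    have := hF (a 1) (a 1)
    rw [show (a 1 * a 1 : QuaternionGroup 2) = a 2 from by decide, hφa] at this
    linear_combination this
  have h3 : F (a 3) = 5 * F (a 1) := by
    have := hF (a 2) (a 1)
    rw [show (a 2 * a 1 : QuaternionGroup 2) = a 3 from by decide, phi_a2 φ hφa hφb, h2] at this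
    linear_combination this
  have hx1 : F (xa 1) = 5 * F (a 1) + F (xa 0) := by
    have := hF (xa 0) (a 1)
    rw [show (xa 0 * a 1 : QuaternionGroup 2) = xa 1 from by decide, hφb] at this
    linear_combination this
  have hx1' : F (xa 1) = 3 * F (xa 0) + 5 * F (a 1) := by
    have := hF (a 3) (xa 0)
    rw [show (a 3 * xa 0 : QuaternionGroup 2) = xa 1 from by decide, phi_a3 φ hφa hφb, h3] at this
    linear_combination this
  have hβ : 2 * F (xa 0) = 0 := by linear_combination hx1 - hx1'
  have hsq : F (a 2) = 6 * F (xa 0) := by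
    have := hF (xa 0) (xa 0)
    rw [show (xa 0 * xa 0 : QuaternionGroup 2) = a 2 from by decide, hφb] at this
    linear_combination this
  have hα : 4 * F (a 1) = 0 := by linear_combination hsq - h2 + 3 * hβ
  have hx2 : F (xa 2) = F (xa 0) + 4 * F (a 1) := by
    have := hF (a 2) (xa 0)
    rw [show (a 2 * xa 0 : QuaternionGroup 2) = xa 2 from by decide, phi_a2 φ hφa hφb, h2] at this
    linear_combination this
  have hx3 : F (xa 3) = 3 * F (xa 0) + F (a 1) := by
    have := hF (a 1) (xa 0)
    rw [show (a 1 * xa 0 : QuaternionGroup 2) = xa 3 from by decide, hφa] at this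
    linear_combination this
  exact ⟨h0, hβ, hα, h2, h3, hx1, hx2, hx3⟩

end phivals

open groupCohomology

/-- Let `Q₈ = ⟨a,b : a² = b², aba⁻¹ = b⁻¹⟩` act on `C₈ = ⟨c : c⁸ = 1⟩` by `a·c = c³`,
`b·c = c⁵`.  Then `H¹(Q₈, Hom(C₈, ℂ*)) ≅ ℤ/2`, where `Q₈` acts on the character group
`Hom(C₈, ℂ*) ≅ ℤ/8` by `(g·ρ) = ρ ∘ (g⁻¹·)`; concretely, `a` acts as multiplication by 3
and `b` as multiplication by 5. -/
theorem stmt_4 (φ : QuaternionGroup 2 →* (ZMod 8)ˣ)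
    (hφa : (φ (QuaternionGroup.a 1) : ZMod 8) = 3)
    (hφb : (φ (QuaternionGroup.xa 0) : ZMod 8) = 5) :
    Nonempty ((groupCohomology.H1 (Rep.of (charRep φ))) ≃ₗ[ℤ] ZMod 2) := by
  classical
  set A := Rep.of (charRep φ) with hA
  let B : Submodule ℤ (cocycles₁ A) := (coboundaries₁ A).comap (cocycles₁ A).subtype
  -- view a cocycle as a plain function to `ZMod 8`
  let Fv : cocycles₁ A → QuaternionGroup 2 → ZMod 8 := fun f g => show ZMod 8 from f g
  have hFv : ∀ (f : cocycles₁ A) (g h : QuaternionGroup 2),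
      Fv f (g * h) = (φ g : ZMod 8) * Fv f h + Fv f g := by
    intro f g h
    exact (mem_cocycles₁_iff (A := A) f).1 f.2 g h
  have key := fun f : cocycles₁ A => cocycle_facts φ hφa hφb (Fv f) (hFv f)
  have tor : ∀ f : cocycles₁ A, 2 * (Fv f (xa 0) - 2 * Fv f (a 1)) = 0 := by
    intro f
    obtain ⟨-, hβ, hα, -⟩ := key f
    linear_combination hβ - hα
  have hFv_add : ∀ (f g : cocycles₁ A) (x : QuaternionGroup 2),
      Fv (f + g) x = Fv f x + Fv g x := fun f g x => rfl
  let σ0 : cocycles₁ A →+ ZMod 2 :=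
    { toFun := fun f => qmap (Fv f (xa 0) - 2 * Fv f (a 1))
      map_zero' := by
        show qmap ((0 : ZMod 8) - 2 * (0 : ZMod 8)) = 0
        decide
      map_add' := by
        intro f g
        show qmap (Fv (f + g) (xa 0) - 2 * Fv (f + g) (a 1)) =
          qmap (Fv f (xa 0) - 2 * Fv f (a 1)) + qmap (Fv g (xa 0) - 2 * Fv g (a 1))
        rw [hFv_add, hFv_add,
          show (Fv f (xa 0) + Fv g (xa 0)) - 2 * (Fv f (a 1) + Fv g (a 1)) =
            (Fv f (xa 0) - 2 * Fv f (a 1)) + (Fv g (xa 0) - 2 * Fv g (a 1)) from by ring]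
        exact qmap_add _ _ (tor f) (tor g) }
  let σ : cocycles₁ A →ₗ[ℤ] ZMod 2 := σ0.toIntLinearMap
  have hσ : ∀ f : cocycles₁ A, σ f = qmap (Fv f (xa 0) - 2 * Fv f (a 1)) := fun f => rfl
  have hker : B ≤ LinearMap.ker σ := by
    rintro f ⟨x, hx⟩
    have hfg : ∀ g : QuaternionGroup 2,
        Fv f g = (φ g : ZMod 8) * (show ZMod 8 from x) - (show ZMod 8 from x) := by
      intro g; show ((cocycles₁ A).subtype f : _ → _) g = _; rw [← hx]; rfl
    simp only [LinearMap.mem_ker, hσ]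
    rw [hfg, hfg, hφa, hφb]
    rw [show (5 * (show ZMod 8 from x) - (show ZMod 8 from x)) -
        2 * (3 * (show ZMod 8 from x) - (show ZMod 8 from x)) = (0 : ZMod 8) from by ring]
    decide
  let T : (cocycles₁ A ⧸ B) →ₗ[ℤ] ZMod 2 := (B).liftQ σ hker
  -- the nontrivial cocycle
  let F1 : QuaternionGroup 2 → ZMod 8 := fun g => match g with
    | .a _ => 0
    | .xa _ => 4
  have hunit : ∀ u : (ZMod 8)ˣ, (u : ZMod 8) * 4 = 4 := by decide
  have hF1 : F1 ∈ cocycles₁ A := by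
    rw [mem_cocycles₁_iff]
    rintro (i | i) (j | j)
    · show F1 (a i * a j) = (φ (a i) : ZMod 8) * F1 (a j) + F1 (a i)
      rw [a_mul_a]; show (0 : ZMod 8) = _ * 0 + 0; ring
    · show F1 (a i * xa j) = (φ (a i) : ZMod 8) * F1 (xa j) + F1 (a i)
      rw [a_mul_xa]; show (4 : ZMod 8) = _ * 4 + 0; rw [hunit]; ring
    · show F1 (xa i * a j) = (φ (xa i) : ZMod 8) * F1 (a j) + F1 (xa i)
      rw [xa_mul_a]; show (4 : ZMod 8) = _ * 0 + 4; ring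
    · show F1 (xa i * xa j) = (φ (xa i) : ZMod 8) * F1 (xa j) + F1 (xa i)
      rw [xa_mul_xa]; show (0 : ZMod 8) = _ * 4 + 4; rw [hunit]; decide
  let f1 : cocycles₁ A := ⟨F1, hF1⟩
  have hTf1 : T (Submodule.Quotient.mk f1) = 1 := by
    have h1 : T (Submodule.Quotient.mk f1) = σ f1 :=
      Submodule.liftQ_apply (B) σ f1
    rw [h1, hσ]
    show qmap ((4 : ZMod 8) - 2 * 0) = 1
    decide
  have hsurj : Function.Surjective T := by
    intro y
    have hy : y = 0 ∨ y = 1 := by revert y; decide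
    rcases hy with rfl | rfl
    · exact ⟨0, map_zero T⟩
    · exact ⟨Submodule.Quotient.mk f1, hTf1⟩
  have hinj : Function.Injective T := by
    refine LinearMap.ker_eq_bot.mp (eq_bot_iff.mpr ?_)
    intro z hz
    rw [LinearMap.mem_ker] at hz
    rw [Submodule.mem_bot]
    obtain ⟨f, rfl⟩ := Submodule.Quotient.mk_surjective _ z
    have hz' : σ f = 0 := by
      rw [← Submodule.liftQ_apply (B) σ f]; exact hz
    rw [hσ] at hz'
    have hv : Fv f (xa 0) - 2 * Fv f (a 1) = 0 := (qmap_zero_iff _ (tor f)).1 hz'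
    obtain ⟨h0', hβ, hα, h2, h3, hx1, hx2, hx3⟩ := key f
    obtain ⟨x₀, hx₀⟩ := exists_half _ hα
    rw [Submodule.Quotient.mk_eq_zero]
    refine ⟨x₀, ?_⟩
    funext g
    have hcases : g = a 0 ∨ g = a 1 ∨ g = a 2 ∨ g = a 3 ∨ g = xa 0 ∨ g = xa 1 ∨
        g = xa 2 ∨ g = xa 3 := by revert g; decide
    rcases hcases with rfl | rfl | rfl | rfl | rfl | rfl | rfl | rfl
    · show (φ (a 0) : ZMod 8) * x₀ - x₀ = Fv f (a 0)
      rw [phi_a0 φ hφa hφb, h0']; ring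
    · show (φ (a 1) : ZMod 8) * x₀ - x₀ = Fv f (a 1)
      rw [hφa]; linear_combination hx₀
    · show (φ (a 2) : ZMod 8) * x₀ - x₀ = Fv f (a 2)
      rw [phi_a2 φ hφa hφb, h2]; linear_combination -hα
    · show (φ (a 3) : ZMod 8) * x₀ - x₀ = Fv f (a 3)
      rw [phi_a3 φ hφa hφb, h3]; linear_combination hx₀ - hα
    · show (φ (xa 0) : ZMod 8) * x₀ - x₀ = Fv f (xa 0)
      rw [hφb]; linear_combination 2 * hx₀ - hv
    · show (φ (xa 1) : ZMod 8) * x₀ - x₀ = Fv f (xa 1)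
      rw [phi_x1 φ hφa hφb, hx1]; linear_combination 3 * hx₀ - hv - hα
    · show (φ (xa 2) : ZMod 8) * x₀ - x₀ = Fv f (xa 2)
      rw [phi_x2 φ hφa hφb, hx2]; linear_combination 2 * hx₀ - hv - hα
    · show (φ (xa 3) : ZMod 8) * x₀ - x₀ = Fv f (xa 3)
      rw [phi_x3 φ hφa hφb, hx3]; linear_combination 3 * hx₀ - 3 * hv - hα
  have hPs : Function.Surjective (H1π A).hom :=
    (ModuleCat.epi_iff_surjective _).1 inferInstance
  have hPk : LinearMap.ker (H1π A).hom = B := by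
    ext f; rw [LinearMap.mem_ker]; exact H1π_eq_zero_iff f
  exact ⟨((Submodule.quotEquivOfEq _ _ hPk).symm.trans
    (LinearMap.quotKerEquivOfSurjective _ hPs)).symm.trans
    (LinearEquiv.ofBijective T ⟨hinj, hsurj⟩)⟩
end

section
/- Let G = C₈ ⋊ Q₈ with the action a·c = c³, b·c = c⁵ as above, and let F: Q₈ → Hom(C₈, ℂ*) be the 1-cochain determined by F(a^{±1}) = ρ², F(b^{±1}) = ρ⁰, F((ab)^{±1}) = ρ², F(a²) = ρ⁰, where ρ generates Hom(C₈, ℂ*) ≅ ℤ/8. Then F is a 1-cocycle that is not a coboundary, but F² is the coboundary of ρ², so the class [F] ∈ H¹(Q₈, Hom(C₈, ℂ*)) has order exactly 2. -/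
/-! Identifying `ρᵏ` with `k`, `F g = (φ g - 1) + c g`, i.e. `F = δ(ρ) + c`, where
`c : Q₈ → ℤ/8` is `4` on the coset of `b` and `0` on `⟨a⟩`. Every unit of `ℤ/8` is odd, so `Q₈`
fixes `4` and the homomorphism `c` is a cocycle; hence so is `F`. Since `c + c = 0`,
`F + F = δ(ρ²)`. Finally `F = δ(m)` is impossible: evaluating at `a` gives `2m = 2`, evaluating
at `b` gives `4m = 0`. -/

namespace ZMod

theorem inv_eq_self_of_unit_eight (u : (ZMod 8)ˣ) : u⁻¹ = u := by
  revert u; decide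

theorem val_unit_mul_four_eq_four (u : (ZMod 8)ˣ) : (u : ZMod 8) * 4 = 4 := by
  revert u; decide

end ZMod

namespace QuaternionGroup

variable {n : ℕ} {R : Type*} [AddCommGroup R]

def xaIndicator (t : R) : QuaternionGroup n → R
  | a _ => 0
  | xa _ => t

theorem xaIndicator_mul {t : R} (ht : t + t = 0) (g h : QuaternionGroup n) :
    xaIndicator t (g * h) = xaIndicator t g + xaIndicator t h := by
  rcases g with i | i <;> rcases h with j | j <;> simp [xaIndicator, ht]

theorem xaIndicator_add_self {t : R} (ht : t + t = 0) (g : QuaternionGroup n) :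
    xaIndicator t g + xaIndicator t g = 0 := by
  rcases g with i | i <;> simp [xaIndicator, ht]

theorem forall_quaternionGroup_two {P : QuaternionGroup 2 → Prop} :
    (∀ g, P g) ↔ P 1 ∧ P (a 1) ∧ P (a 1)⁻¹ ∧ P (a 1 ^ 2) ∧ P (xa 0) ∧ P (xa 0)⁻¹ ∧
      P (a 1 * xa 0) ∧ P (a 1 * xa 0)⁻¹ := by
  refine ⟨fun h => ⟨h _, h _, h _, h _, h _, h _, h _, h _⟩, ?_⟩
  rintro ⟨h1, ha, ha', ha2, hb, hb', hab, hab'⟩ (i | i) <;> fin_cases i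
  exacts [h1, ha, ha2, ha', hb, hab', hb', hab]

end QuaternionGroup

theorem coboundary_add_hom_isCocycle {G R : Type*} [Monoid G] [CommRing R] (φ : G →* Rˣ)
    (m : R) {c : G → R} (hc : ∀ g h, c (g * h) = c g + c h) (hfix : ∀ g x, φ g * c x = c x)
    (g h : G) :
    φ (g * h) * m - m + c (g * h) = φ g * (φ h * m - m + c h) + (φ g * m - m + c g) := by
  rw [hc, map_mul, Units.val_mul, mul_add (φ g : R), hfix]
  ring

open QuaternionGroup

/-- Identify `Hom(C₈, ℂ*) ≅ ℤ/8` (with `ρᵏ ↔ k`), so that `Q₈` acts on `ℤ/8` through a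
homomorphism `φ : Q₈ → (ℤ/8)ˣ` with `φ(a) = 3`, `φ(b) = 5` (coming from the action
`a·c = c³`, `b·c = c⁵` of `Q₈` on `C₈` via `(g·χ)(c) = χ(g⁻¹·c)`).
The 1-cochain `F : Q₈ → ℤ/8` determined by `F(a^{±1}) = ρ²`, `F(b^{±1}) = ρ⁰`,
`F((ab)^{±1}) = ρ²`, `F(a²) = ρ⁰` (and `F(1) = ρ⁰`) is a 1-cocycle which is not a
coboundary, while `F²` is the coboundary of `ρ²`; hence its class in
`H¹(Q₈, Hom(C₈, ℂ*))` has order exactly 2. -/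
theorem stmt_19 (φ : QuaternionGroup 2 →* (ZMod 8)ˣ)
    (hφa : (φ (QuaternionGroup.a 1) : ZMod 8) = 3)
    (hφb : (φ (QuaternionGroup.xa 0) : ZMod 8) = 5)
    (F : QuaternionGroup 2 → ZMod 8)
    (hF1 : F 1 = 0)
    (hFa : F (QuaternionGroup.a 1) = 2) (hFa' : F ((QuaternionGroup.a 1)⁻¹) = 2)
    (hFb : F (QuaternionGroup.xa 0) = 0) (hFb' : F ((QuaternionGroup.xa 0)⁻¹) = 0)
    (hFab : F (QuaternionGroup.a 1 * QuaternionGroup.xa 0) = 2)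
    (hFab' : F ((QuaternionGroup.a 1 * QuaternionGroup.xa 0)⁻¹) = 2)
    (hFa2 : F (QuaternionGroup.a 1 ^ 2) = 0) :
    (∀ g h : QuaternionGroup 2, F (g * h) = (φ g : ZMod 8) * F h + F g) ∧
    (¬ ∃ m : ZMod 8, ∀ g : QuaternionGroup 2, F g = (φ g : ZMod 8) * m - m) ∧
    (∀ g : QuaternionGroup 2, F g + F g = (φ g : ZMod 8) * 2 - 2) := by
  have hfour : (4 : ZMod 8) + 4 = 0 := by decide
  have hF : ∀ g, F g = φ g * 1 - 1 + xaIndicator 4 g := by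
    refine forall_quaternionGroup_two.2 ⟨?_, ?_, ?_, ?_, ?_, ?_, ?_, ?_⟩ <;>
      simp only [hF1, hFa, hFa', hFb, hFb', hFab, hFab', hFa2, map_one, map_inv, map_mul,
        map_pow, ZMod.inv_eq_self_of_unit_eight, Units.val_one, Units.val_mul,
        Units.val_pow_eq_pow_val, hφa, hφb] <;> decide
  refine ⟨fun g h => ?_, ?_, fun g => ?_⟩
  · simp only [hF]
    refine coboundary_add_hom_isCocycle φ 1 (xaIndicator_mul hfour) (fun g x => ?_) g h
    rcases x with i | i
    exacts [mul_zero _, ZMod.val_unit_mul_four_eq_four _]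
  · rintro ⟨m, hm⟩
    have ha := hm (a 1)
    have hb := hm (xa 0)
    rw [hFa, hφa] at ha
    rw [hFb, hφb] at hb
    have : (4 : ZMod 8) = 0 := by linear_combination 2 * ha - hb
    exact absurd this (by decide)
  · rw [hF]
    linear_combination xaIndicator_add_self hfour g
end
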